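/- arXiv:2411.08479 — 7 statements merged into one kernel-verified Lean document; each statement's English description precedes it below -/
import Mathlib

section
/- The set of ternary quartic forms over ℝ that can be written as a sum of three squares of quadratic forms is closed in the (finite-dimensional real) coefficient space of all ternary quartic forms: if a homogeneous degree-4 polynomial f ∈ ℝ[x,y,z] is the limit (coefficientwise) of a sequence of forms f_n, each of which is a sum of three squares of homogeneous degree-2 polynomials, then f itself is a sum of three squares of homogeneous degree-2 polynomials. -/
/-!
Each square is dominated pointwise by the sum, so along a convergent sequence of sums of squares
the forms are pointwise bounded. Evaluations at points separate real polynomials, hence span the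
dual of the finite-dimensional space of forms of a given degree; every coefficient is therefore a
fixed finite combination of values, and the coefficients are bounded as well. Bolzano–Weierstrass
gives a coefficientwise convergent subsequence, and the squares of its limit forms sum to the
limit.
-/

open MvPolynomial Filter Topology

namespace MvPolynomial

variable {σ ι κ R : Type*}

section Coeffwise

variable [CommSemiring R] [TopologicalSpace R]

def TendstoCoeffwise (p : ι → MvPolynomial σ R) (l : Filter ι) (P : MvPolynomial σ R) : Prop :=
  ∀ d, Tendsto (fun i => coeff d (p i)) l (𝓝 (coeff d P))

variable {p : ι → MvPolynomial σ R} {l : Filter ι} {P : MvPolynomial σ R}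

theorem TendstoCoeffwise.comp {ι' : Type*} {l' : Filter ι'} {φ : ι' → ι}
    (h : TendstoCoeffwise p l P) (hφ : Tendsto φ l' l) :
    TendstoCoeffwise (fun j => p (φ j)) l' P :=
  fun d => (h d).comp hφ

theorem TendstoCoeffwise.mul [IsTopologicalSemiring R] {q : ι → MvPolynomial σ R}
    {Q : MvPolynomial σ R} (hp : TendstoCoeffwise p l P) (hq : TendstoCoeffwise q l Q) :
    TendstoCoeffwise (fun i => p i * q i) l (P * Q) := by
  classical
  intro d
  simp only [coeff_mul]
  exact tendsto_finsetSum _ fun x _ => (hp x.1).mul (hq x.2)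

theorem TendstoCoeffwise.pow [IsTopologicalSemiring R] (h : TendstoCoeffwise p l P) (m : ℕ) :
    TendstoCoeffwise (fun i => p i ^ m) l (P ^ m) := by
  induction m with
  | zero => exact fun d => by simpa only [pow_zero] using tendsto_const_nhds
  | succ m ih => simpa only [pow_succ] using ih.mul h

theorem TendstoCoeffwise.sum [ContinuousAdd R] {p : κ → ι → MvPolynomial σ R}
    {P : κ → MvPolynomial σ R} (s : Finset κ) (h : ∀ k ∈ s, TendstoCoeffwise (p k) l (P k)) :
    TendstoCoeffwise (fun i => ∑ k ∈ s, p k i) l (∑ k ∈ s, P k) := by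
  intro d
  simp only [coeff_sum]
  exact tendsto_finsetSum s fun k hk => h k hk d

theorem TendstoCoeffwise.unique [T2Space R] [l.NeBot] {P' : MvPolynomial σ R}
    (h : TendstoCoeffwise p l P) (h' : TendstoCoeffwise p l P') : P = P' :=
  MvPolynomial.ext _ _ fun d => tendsto_nhds_unique (h d) (h' d)

theorem TendstoCoeffwise.isHomogeneous [T2Space R] [l.NeBot] {n : ℕ}
    (h : TendstoCoeffwise p l P) (hp : ∀ᶠ i in l, (p i).IsHomogeneous n) :
    P.IsHomogeneous n := by
  intro d hd
  by_contra hdn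
  replace hdn : d.degree ≠ n := by rwa [Finsupp.degree_eq_weight_one]
  refine hd (tendsto_nhds_unique (h d) (tendsto_const_nhds.congr' ?_))
  filter_upwards [hp] with i hi using (hi.coeff_eq_zero hdn).symm

theorem TendstoCoeffwise.tendsto_eval [IsTopologicalSemiring R] (h : TendstoCoeffwise p l P)
    {T : Set (σ →₀ ℕ)} (hT : T.Finite) (hpT : ∀ i, ↑(p i).support ⊆ T) (hPT : ↑P.support ⊆ T)
    (x : σ → R) : Tendsto (fun i => eval x (p i)) l (𝓝 (eval x P)) := by
  have heval : ∀ q : MvPolynomial σ R, ↑q.support ⊆ T →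
      eval x q = ∑ d ∈ hT.toFinset, coeff d q * ∏ t ∈ d.support, x t ^ d t := fun q hq => by
    rw [eval_eq]
    refine Finset.sum_subset (by simpa using hq) fun d _ hd => ?_
    rw [notMem_support_iff.1 hd, zero_mul]
  simp only [heval _ (hpT _), heval _ hPT]
  exact tendsto_finsetSum _ fun d _ => (h d).mul_const _

end Coeffwise

theorem IsHomogeneous.support_subset [CommSemiring R] {p : MvPolynomial σ R} {n : ℕ}
    (hp : p.IsHomogeneous n) : ↑p.support ⊆ {d : σ →₀ ℕ | d.degree = n} := fun d hd => by
  by_contra hdn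
  exact mem_support_iff.1 hd (hp.coeff_eq_zero hdn)

theorem exists_abs_coeff_le_of_forall_exists_abs_eval_le {V : Submodule ℝ (MvPolynomial σ ℝ)}
    [FiniteDimensional ℝ V] {p : ι → MvPolynomial σ ℝ} (hpV : ∀ i, p i ∈ V)
    (hp : ∀ x, ∃ C, ∀ i, |eval x (p i)| ≤ C) (d : σ →₀ ℕ) :
    ∃ C, ∀ i, |coeff d (p i)| ≤ C := by
  let ev : (σ → ℝ) → Module.Dual ℝ V := fun x => (aeval x).toLinearMap ∘ₗ V.subtype
  have hspan : Submodule.span ℝ (Set.range ev) = ⊤ := by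
    refine Submodule.span_eq_top_of_ne_zero fun v hv => ?_
    by_contra! hev
    refine hv (Subtype.ext (MvPolynomial.funext fun x => ?_))
    simpa [ev] using hev (ev x) ⟨x, rfl⟩
  obtain ⟨c, hc⟩ := Finsupp.mem_span_range_iff_exists_finsupp.1
    (hspan ▸ Submodule.mem_top : lcoeff ℝ d ∘ₗ V.subtype ∈ Submodule.span ℝ (Set.range ev))
  choose C hC using hp
  refine ⟨∑ x ∈ c.support, |c x| * C x, fun i => ?_⟩
  have hcoeff : coeff d (p i) = ∑ x ∈ c.support, c x * eval x (p i) := by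
    simpa [ev, Finsupp.sum] using (LinearMap.congr_fun hc ⟨p i, hpV i⟩).symm
  calc |coeff d (p i)| ≤ ∑ x ∈ c.support, |c x * eval x (p i)| := by
        rw [hcoeff]; exact Finset.abs_sum_le_sum_abs _ _
    _ ≤ ∑ x ∈ c.support, |c x| * C x := Finset.sum_le_sum fun x _ => by
        rw [abs_mul]; exact mul_le_mul_of_nonneg_left (hC x i) (abs_nonneg _)

theorem exists_strictMono_tendstoCoeffwise [Finite κ] {T : Set (σ →₀ ℕ)} (hT : T.Finite)
    {p : κ → ℕ → MvPolynomial σ ℝ} (hpT : ∀ k n, ↑(p k n).support ⊆ T)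
    (hp : ∀ k d, ∃ C, ∀ n, |coeff d (p k n)| ≤ C) :
    ∃ (P : κ → MvPolynomial σ ℝ) (φ : ℕ → ℕ), StrictMono φ ∧
      ∀ k, TendstoCoeffwise (fun n => p k (φ n)) atTop (P k) := by
  have := hT.to_subtype
  choose C hC using hp
  have hmem : ∀ n, (fun k (d : T) => coeff d (p k n)) ∈
      Set.univ.pi fun k => Set.univ.pi fun d : T => Set.Icc (-C k d) (C k d) :=
    fun n k _ d _ => abs_le.1 (hC k d n)
  obtain ⟨a, -, φ, hφ, ha⟩ :=
    (isCompact_univ_pi fun k => isCompact_univ_pi fun d => isCompact_Icc).tendsto_subseq hmem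
  classical
  refine ⟨fun k => ∑ d ∈ hT.toFinset, monomial d (if hd : d ∈ T then a k ⟨d, hd⟩ else 0),
    φ, hφ, fun k d => ?_⟩
  simp only [coeff_sum, coeff_monomial, Finset.sum_ite_eq', Set.Finite.mem_toFinset]
  split_ifs with hd
  · exact tendsto_pi_nhds.1 (tendsto_pi_nhds.1 ha k) ⟨d, hd⟩
  · simp [notMem_support_iff.1 fun h => hd (hpT k _ h)]

theorem exists_eq_sum_sq_of_tendstoCoeffwise [Finite σ] [Fintype κ] {m : ℕ}
    {q : κ → ℕ → MvPolynomial σ ℝ} (hq : ∀ k n, (q k n).IsHomogeneous m)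
    {f : MvPolynomial σ ℝ} (hf : TendstoCoeffwise (fun n => ∑ k, q k n ^ 2) atTop f) :
    ∃ Q : κ → MvPolynomial σ ℝ, (∀ k, (Q k).IsHomogeneous m) ∧ f = ∑ k, Q k ^ 2 := by
  have hF : ∀ n, (∑ k, q k n ^ 2).IsHomogeneous (m * 2) := fun n =>
    IsHomogeneous.sum _ _ _ fun k _ => (hq k n).pow 2
  have hf_hom : f.IsHomogeneous (m * 2) := hf.isHomogeneous (.of_forall hF)
  have h_eval : ∀ x, ∃ C, ∀ k n, |eval x (q k n)| ≤ C := by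
    intro x
    obtain ⟨C, hC⟩ := (hf.tendsto_eval (Finsupp.finite_of_degree_eq _)
      (fun n => (hF n).support_subset) hf_hom.support_subset x).bddAbove_range
    refine ⟨√C, fun k n => Real.abs_le_sqrt ?_⟩
    calc eval x (q k n) ^ 2 ≤ ∑ j, eval x (q j n) ^ 2 :=
          Finset.single_le_sum (f := fun j => eval x (q j n) ^ 2) (fun j _ => sq_nonneg _)
            (Finset.mem_univ k)
      _ = eval x (∑ j, q j n ^ 2) := by simp
      _ ≤ C := hC ⟨n, rfl⟩
  have : FiniteDimensional ℝ (homogeneousSubmodule σ ℝ m) :=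
    Module.Finite.iff_fg.2 (homogeneousSubmodule_fg σ ℝ m)
  have h_coeff : ∀ k d, ∃ C, ∀ n, |coeff d (q k n)| ≤ C := fun k =>
    exists_abs_coeff_le_of_forall_exists_abs_eval_le (V := homogeneousSubmodule σ ℝ m) (hq k)
      fun x => (h_eval x).imp fun _ hC => hC k
  obtain ⟨Q, φ, hφ, hQ⟩ := exists_strictMono_tendstoCoeffwise (Finsupp.finite_of_degree_eq m)
    (fun k n => (hq k n).support_subset) h_coeff
  refine ⟨Q, fun k => (hQ k).isHomogeneous (.of_forall fun n => hq k _), ?_⟩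
  exact (hf.comp hφ.tendsto_atTop).unique (.sum _ fun k _ => (hQ k).pow 2)

end MvPolynomial

theorem sos3_closed_general
    (f : MvPolynomial (Fin 3) ℝ)
    (F : ℕ → MvPolynomial (Fin 3) ℝ)
    (hFsos : ∀ n, ∃ q₁ q₂ q₃ : MvPolynomial (Fin 3) ℝ,
      q₁.IsHomogeneous 2 ∧ q₂.IsHomogeneous 2 ∧ q₃.IsHomogeneous 2 ∧
      F n = q₁ ^ 2 + q₂ ^ 2 + q₃ ^ 2)
    (hlim : ∀ d : Fin 3 →₀ ℕ,
      Tendsto (fun n => coeff d (F n)) atTop (nhds (coeff d f))) :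
    ∃ q₁ q₂ q₃ : MvPolynomial (Fin 3) ℝ,
      q₁.IsHomogeneous 2 ∧ q₂.IsHomogeneous 2 ∧ q₃.IsHomogeneous 2 ∧
      f = q₁ ^ 2 + q₂ ^ 2 + q₃ ^ 2 := by
  choose q₁ q₂ q₃ hq₁ hq₂ hq₃ hF using hFsos
  have hF_eq : F = fun n => ∑ k, ![q₁, q₂, q₃] k n ^ 2 :=
    funext fun n => by simp [hF n, Fin.sum_univ_three]
  obtain ⟨Q, hQ, hfQ⟩ := exists_eq_sum_sq_of_tendstoCoeffwise (m := 2)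
    (fun k n => by fin_cases k <;> simp [hq₁, hq₂, hq₃]) (hF_eq ▸ hlim)
  exact ⟨Q 0, Q 1, Q 2, hQ 0, hQ 1, hQ 2, by simpa [Fin.sum_univ_three] using hfQ⟩

/-- The set of ternary quartic forms over ℝ that are sums of three squares of
quadratic forms is closed in coefficient space: a coefficientwise limit of such
forms is again such a form. -/
theorem sos3_closed
    (f : MvPolynomial (Fin 3) ℝ) (hf4 : f.IsHomogeneous 4)
    (F : ℕ → MvPolynomial (Fin 3) ℝ)
    (hF4 : ∀ n, (F n).IsHomogeneous 4)
    (hFsos : ∀ n, ∃ q₁ q₂ q₃ : MvPolynomial (Fin 3) ℝ,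
      q₁.IsHomogeneous 2 ∧ q₂.IsHomogeneous 2 ∧ q₃.IsHomogeneous 2 ∧
      F n = q₁ ^ 2 + q₂ ^ 2 + q₃ ^ 2)
    (hlim : ∀ d : Fin 3 →₀ ℕ,
      Tendsto (fun n => coeff d (F n)) atTop (nhds (coeff d f))) :
    ∃ q₁ q₂ q₃ : MvPolynomial (Fin 3) ℝ,
      q₁.IsHomogeneous 2 ∧ q₂.IsHomogeneous 2 ∧ q₃.IsHomogeneous 2 ∧
      f = q₁ ^ 2 + q₂ ^ 2 + q₃ ^ 2 :=
  sos3_closed_general f F hFsos hlim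
end

section
/- Let k be a field of characteristic 0 with algebraic closure K, and let f, g, h ∈ k[x] with f separable and g, h relatively prime. Suppose there are two distinct roots α ≠ β of f in K and elements s, t ∈ K, not both zero, such that s·g(α) + t·h(α) = 0 and s·g(β) + t·h(β) = 0. Then there exist elements a, b lying in the intersection of the subfields k(α) and k(β) of K, not both zero, such that α and β are both roots of the polynomial p = a·g + b·h; in particular p has all its coefficients in the subfield k(α) ∩ k(β) of K. -/
open Polynomial IntermediateField

/-! The relation `s·g + t·h = 0` at a common root `x` forces `h(x) ≠ 0` when `s ≠ 0`, because
`g` and `h` have no common root; hence `t / s = -g(x) / h(x)` lies in `k(x)`. Normalising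
`(s, t)` to `(1, t / s)`, or to `(0, 1)` when `s = 0`, therefore gives coefficients lying in
both `k(α)` and `k(β)`. -/

section Pencil

variable {k K : Type*} [Field k] [Field K] [Algebra k K]

noncomputable def pencil (a b : K) (g h : k[X]) : K[X] :=
  C a * g.map (algebraMap k K) + C b * h.map (algebraMap k K)

theorem eval_pencil (a b : K) (g h : k[X]) (x : K) :
    (pencil a b g h).eval x = a * aeval x g + b * aeval x h := by
  simp only [pencil, eval_add, eval_mul, eval_C, eval_map_algebraMap]

theorem coeff_pencil_mem {S : IntermediateField k K} {a b : K} (ha : a ∈ S) (hb : b ∈ S)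
    (g h : k[X]) (n : ℕ) : (pencil a b g h).coeff n ∈ S := by
  simp only [pencil, coeff_add, coeff_C_mul, coeff_map]
  exact add_mem (mul_mem ha (S.algebraMap_mem _)) (mul_mem hb (S.algebraMap_mem _))

theorem aeval_mem_adjoin_simple (g : k[X]) (x : K) : aeval x g ∈ k⟮x⟯ :=
  algebra_adjoin_le_adjoin k {x} (aeval_mem_adjoin_singleton k x)

theorem div_mem_adjoin_simple_of_isCoprime {g h : k[X]} (hgh : IsCoprime g h) {x s t : K}
    (hs : s ≠ 0) (hx : s * aeval x g + t * aeval x h = 0) : t / s ∈ k⟮x⟯ := by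
  have hhx : aeval x h ≠ 0 := by
    intro hhx
    have hgx : aeval x g = 0 := by simpa [hhx, hs] using hx
    exact (aeval_ne_zero_of_isCoprime hgh x).elim (· hgx) (· hhx)
  have hts : t / s = -aeval x g / aeval x h := by
    field_simp
    linear_combination hx
  rw [hts]
  exact div_mem (neg_mem (aeval_mem_adjoin_simple g x)) (aeval_mem_adjoin_simple h x)

end Pencil

theorem common_pencil_member_coeffs_in_intersection_general
    {k K : Type*} [Field k] [Field K] [Algebra k K]
    (g h : Polynomial k) (hgh : IsCoprime g h)
    (α β : K)
    (s t : K) (hst : ¬(s = 0 ∧ t = 0))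
    (hsα : s * Polynomial.aeval α g + t * Polynomial.aeval α h = 0)
    (hsβ : s * Polynomial.aeval β g + t * Polynomial.aeval β h = 0) :
    ∃ a b : K, ¬(a = 0 ∧ b = 0) ∧
      a ∈ (k⟮α⟯ ⊓ k⟮β⟯ : IntermediateField k K) ∧
      b ∈ (k⟮α⟯ ⊓ k⟮β⟯ : IntermediateField k K) ∧
      (Polynomial.eval α (C a * g.map (algebraMap k K)
          + C b * h.map (algebraMap k K)) = 0) ∧
      (Polynomial.eval β (C a * g.map (algebraMap k K)
          + C b * h.map (algebraMap k K)) = 0) ∧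
      ∀ n : ℕ, (C a * g.map (algebraMap k K)
          + C b * h.map (algebraMap k K)).coeff n
            ∈ (k⟮α⟯ ⊓ k⟮β⟯ : IntermediateField k K) := by
  set S : IntermediateField k K := k⟮α⟯ ⊓ k⟮β⟯
  suffices ∃ a b : K, ¬(a = 0 ∧ b = 0) ∧ a ∈ S ∧ b ∈ S ∧
      ∀ x, s * aeval x g + t * aeval x h = 0 → a * aeval x g + b * aeval x h = 0 by
    obtain ⟨a, b, hab, ha, hb, hroot⟩ := this
    refine ⟨a, b, hab, ha, hb, ?_, ?_, coeff_pencil_mem ha hb g h⟩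
    · exact (eval_pencil a b g h α).trans (hroot α hsα)
    · exact (eval_pencil a b g h β).trans (hroot β hsβ)
  by_cases hs : s = 0
  · have ht : t ≠ 0 := fun ht => hst ⟨hs, ht⟩
    refine ⟨0, 1, by simp, zero_mem S, one_mem S, fun x hx => ?_⟩
    simpa [hs, ht] using hx
  · refine ⟨1, t / s, by simp, one_mem S, ⟨div_mem_adjoin_simple_of_isCoprime hgh hs hsα,
      div_mem_adjoin_simple_of_isCoprime hgh hs hsβ⟩, fun x hx => ?_⟩
    field_simp
    linear_combination hx

/-- Lemma 2.1: if `f` is separable, `g, h` are relatively prime, and two distinct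
roots `α ≠ β` of `f` are common roots of some nontrivial combination
`s·g + t·h` with `s, t` in the algebraic closure, then there is a nontrivial
combination `p = a·g + b·h` with `a, b ∈ k(α) ∩ k(β)` having `α` and `β` as
roots; in particular all coefficients of `p` lie in `k(α) ∩ k(β)`. -/
theorem common_pencil_member_coeffs_in_intersection
    {k K : Type*} [Field k] [Field K] [CharZero k] [Algebra k K]
    [IsAlgClosure k K]
    (f g h : Polynomial k) (hf : f.Separable) (hgh : IsCoprime g h)
    (α β : K) (hαβ : α ≠ β)
    (hα : Polynomial.aeval α f = 0) (hβ : Polynomial.aeval β f = 0)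
    (s t : K) (hst : ¬(s = 0 ∧ t = 0))
    (hsα : s * Polynomial.aeval α g + t * Polynomial.aeval α h = 0)
    (hsβ : s * Polynomial.aeval β g + t * Polynomial.aeval β h = 0) :
    ∃ a b : K, ¬(a = 0 ∧ b = 0) ∧
      a ∈ (k⟮α⟯ ⊓ k⟮β⟯ : IntermediateField k K) ∧
      b ∈ (k⟮α⟯ ⊓ k⟮β⟯ : IntermediateField k K) ∧
      (Polynomial.eval α (C a * g.map (algebraMap k K)
          + C b * h.map (algebraMap k K)) = 0) ∧
      (Polynomial.eval β (C a * g.map (algebraMap k K)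
          + C b * h.map (algebraMap k K)) = 0) ∧
      ∀ n : ℕ, (C a * g.map (algebraMap k K)
          + C b * h.map (algebraMap k K)).coeff n
            ∈ (k⟮α⟯ ⊓ k⟮β⟯ : IntermediateField k K) :=
  common_pencil_member_coeffs_in_intersection_general g h hgh α β s t hst hsα hsβ
end

section
/- Let f₂, f₃, f₄ ∈ ℝ[x], let t ∈ ℝ with t ≠ 0, set g_{ij} = i f_i f_j' − j f_j f_i' for i,j ∈ {2,3,4}, and let p ∈ ℝ[x] be an irreducible quadratic polynomial. Assume: (i) p divides g_{24}² − g_{23}g_{34}; (ii) p divides none of g_{23}, g_{24}, g_{34}; (iii) (2 f₂ g_{24} − f₃ g_{23})² ≡ 8t² g_{24} (2 f₄ g_{24} − f₃ g_{34}) (mod p); (iv) p does not divide 2 f₂ g_{24} − f₃ g_{23}. Then p divides g_{23}·(g_{23} f₃ − 2 g_{24} f₂) − 4t²·g_{24} g_{34}; that is, with A = g_{23}(g_{23} f₃ − 2 g_{24} f₂) and B = g_{24} g_{34}, the polynomial A − 4t²·B is divisible by p. -/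
open Polynomial

/-- Under the stated congruences modulo the irreducible quadratic `p`, the
polynomial `A − 4t²·B = g₂₃(g₂₃ f₃ − 2 g₂₄ f₂) − 4t² g₂₄ g₃₄` is divisible
by `p`. -/
theorem p_dvd_A_sub_four_t_sq_B
    (f₂ f₃ f₄ : Polynomial ℝ) (t : ℝ) (ht : t ≠ 0)
    (g₂₃ g₂₄ g₃₄ : Polynomial ℝ)
    (hg₂₃ : g₂₃ = 2 * f₂ * derivative f₃ - 3 * f₃ * derivative f₂)
    (hg₂₄ : g₂₄ = 2 * f₂ * derivative f₄ - 4 * f₄ * derivative f₂)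
    (hg₃₄ : g₃₄ = 3 * f₃ * derivative f₄ - 4 * f₄ * derivative f₃)
    (p : Polynomial ℝ) (hp : Irreducible p) (hpdeg : p.degree = 2)
    (h1 : p ∣ g₂₄ ^ 2 - g₂₃ * g₃₄)
    (h2 : ¬ p ∣ g₂₃) (h3 : ¬ p ∣ g₂₄) (h4 : ¬ p ∣ g₃₄)
    (h5 : p ∣ (2 * f₂ * g₂₄ - f₃ * g₂₃) ^ 2
            - C (8 * t ^ 2) * g₂₄ * (2 * f₄ * g₂₄ - f₃ * g₃₄))
    (h6 : ¬ p ∣ 2 * f₂ * g₂₄ - f₃ * g₂₃) :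
    p ∣ g₂₃ * (g₂₃ * f₃ - 2 * g₂₄ * f₂) - C (4 * t ^ 2) * (g₂₄ * g₃₄) := by
  have hprime : Prime p := hp.prime
  set u : Polynomial ℝ := 2 * f₂ * g₂₄ - f₃ * g₂₃ with hu
  have key : 2 * g₂₃ * ((2 * f₂ * g₂₄ - f₃ * g₂₃) ^ 2
        - C (8 * t ^ 2) * g₂₄ * (2 * f₄ * g₂₄ - f₃ * g₃₄))
      + 24 * C (t ^ 2) * g₂₄ * f₃ * (g₂₄ ^ 2 - g₂₃ * g₃₄)
      = 2 * u * (g₂₃ * u + 4 * C (t ^ 2) * (g₂₄ * g₃₄)) := by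
    subst hg₂₃ hg₂₄ hg₃₄
    simp only [hu, map_mul, map_ofNat]
    ring
  have hdvd : p ∣ 2 * u * (g₂₃ * u + 4 * C (t ^ 2) * (g₂₄ * g₃₄)) := by
    rw [← key]
    exact dvd_add (Dvd.dvd.mul_left h5 _) (Dvd.dvd.mul_left h1 _)
  have hp2 : ¬ p ∣ (2 : Polynomial ℝ) := by
    intro h
    have := Polynomial.degree_le_of_dvd h two_ne_zero
    rw [hpdeg] at this
    rw [(map_ofNat C 2).symm, Polynomial.degree_C (by norm_num)] at this
    norm_num at this
  have hmain : p ∣ g₂₃ * u + 4 * C (t ^ 2) * (g₂₄ * g₃₄) := by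
    rcases (hprime.dvd_mul.mp hdvd) with h | h
    · rcases hprime.dvd_mul.mp h with h | h
      · exact absurd h hp2
      · exact absurd h h6
    · exact h
  have : g₂₃ * (g₂₃ * f₃ - 2 * g₂₄ * f₂) - C (4 * t ^ 2) * (g₂₄ * g₃₄)
      = -(g₂₃ * u + 4 * C (t ^ 2) * (g₂₄ * g₃₄)) := by
    simp only [hu, map_mul, map_ofNat]
    ring
  rw [this]
  exact hmain.neg_right
end

section
/- Let f₂, f₃, f₄, ξ, η ∈ ℝ[x] with deg f₂ ≤ 2, deg f₃ ≤ 3, deg f₄ ≤ 4, deg ξ ≤ 2, deg η ≤ 3, and let t ∈ ℝ, t ≠ 0, satisfy η² = (f₂ − tξ)(4f₄ − ξ²) − f₃². Set g_{ij} = i f_i f_j' − j f_j f_i' for i,j ∈ {2,3,4} and f₆ = 4f₂f₄ − f₃². Assume: gcd(f₃,f₄) = 1; gcd(g_{23},g_{24}) = 1; gcd(g_{34},g_{24}) = 1; f₃ and f₆ are separable; and there is no pair (s,u) ∈ ℂ² with (s,u) ≠ (0,0) such that f₃ and s·f₂² + u·f₄ have a common factor of degree at least 2 in ℂ[x]. If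 p ∈ ℝ[x] is an irreducible quadratic polynomial dividing both g_t(ξ) = tξ³ − f₂ξ² − 4t f₄ ξ + 4f₂f₄ − f₃² and h_t(ξ) = 3tξ² − 2f₂ξ − 4t f₄, then p divides both P = g_{24}² − g_{23}g_{34} and A − 4t²·B, where A = g_{23}(g_{23} f₃ − 2 g_{24} f₂) and B = g_{24} g_{34}. In particular, P and the nontrivial linear combination A − 4t²B of A and B have a common factor of degree 2. -/
open Polynomial

/-- Proposition 1.4 of the paper: under the generic assumptions on the triple
`(f₂,f₃,f₄)`, if an irreducible quadratic `p` divides both `g_t(ξ)` and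
`h_t(ξ)`, then `p` divides `P = g₂₄² − g₂₃g₃₄` and the nontrivial linear
combination `A − 4t²·B`, where `A = g₂₃(g₂₃f₃ − 2g₂₄f₂)` and `B = g₂₄g₃₄`. -/
theorem prop_improvenaja
    (f₂ f₃ f₄ ξ η : Polynomial ℝ)
    (hd₂ : f₂.degree ≤ 2) (hd₃ : f₃.degree ≤ 3) (hd₄ : f₄.degree ≤ 4)
    (hdξ : ξ.degree ≤ 2) (hdη : η.degree ≤ 3)
    (t : ℝ) (ht : t ≠ 0)
    (hη : η ^ 2 = (f₂ - C t * ξ) * (4 * f₄ - ξ ^ 2) - f₃ ^ 2)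
    (g₂₃ g₂₄ g₃₄ f₆ : Polynomial ℝ)
    (hg₂₃ : g₂₃ = 2 * f₂ * derivative f₃ - 3 * f₃ * derivative f₂)
    (hg₂₄ : g₂₄ = 2 * f₂ * derivative f₄ - 4 * f₄ * derivative f₂)
    (hg₃₄ : g₃₄ = 3 * f₃ * derivative f₄ - 4 * f₄ * derivative f₃)
    (hf₆ : f₆ = 4 * f₂ * f₄ - f₃ ^ 2)
    (hc₁ : IsCoprime f₃ f₄)
    (hc₂ : IsCoprime g₂₃ g₂₄)
    (hc₃ : IsCoprime g₃₄ g₂₄)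
    (hs₃ : f₃.Separable) (hs₆ : f₆.Separable)
    (hΦ : ¬ ∃ (s u : ℂ), ¬(s = 0 ∧ u = 0) ∧
        ∃ d : Polynomial ℂ, 2 ≤ d.degree ∧
          d ∣ f₃.map (algebraMap ℝ ℂ) ∧
          d ∣ (C s * (f₂.map (algebraMap ℝ ℂ)) ^ 2
                + C u * f₄.map (algebraMap ℝ ℂ)))
    (p : Polynomial ℝ) (hp : Irreducible p) (hpdeg : p.degree = 2)
    (hpg : p ∣ (C t * ξ ^ 3 - f₂ * ξ ^ 2 - C (4 * t) * f₄ * ξ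
                  + 4 * f₂ * f₄ - f₃ ^ 2))
    (hph : p ∣ (C (3 * t) * ξ ^ 2 - 2 * f₂ * ξ - C (4 * t) * f₄)) :
    p ∣ g₂₄ ^ 2 - g₂₃ * g₃₄ ∧
    p ∣ g₂₃ * (g₂₃ * f₃ - 2 * g₂₄ * f₂) - C (4 * t ^ 2) * (g₂₄ * g₃₄) := by
  classical
  -- Obtain a complex root `z` of `p`.
  have hdegmap : (p.map (algebraMap ℝ ℂ)).degree = p.degree :=
    degree_map_eq_of_injective (algebraMap ℝ ℂ).injective p
  have hdegpos : 0 < (p.map (algebraMap ℝ ℂ)).degree := by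
    rw [hdegmap, hpdeg]; norm_num
  obtain ⟨z, hz0⟩ := Complex.exists_root hdegpos
  have hz : aeval z p = 0 := by rwa [aeval_def, ← eval_map]
  -- `p` divides exactly the real polynomials vanishing at `z`.
  have hdvd : ∀ q : Polynomial ℝ, aeval z q = 0 → p ∣ q := by
    intro q hq
    have h1 := minpoly.dvd ℝ z hq
    rw [← minpoly.eq_of_irreducible hp hz] at h1
    exact (dvd_mul_right p _).trans h1
  have heval : ∀ q : Polynomial ℝ, p ∣ q → aeval z q = 0 := by
    rintro q ⟨k, rfl⟩; rw [map_mul, hz, zero_mul]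
  -- `p ∣ η` because `η² = g_t(ξ)`.
  have hη2 : η ^ 2 = C t * ξ ^ 3 - f₂ * ξ ^ 2 - C (4 * t) * f₄ * ξ
      + 4 * f₂ * f₄ - f₃ ^ 2 := by
    rw [hη]; simp only [map_mul, map_ofNat]; ring
  have hpη : p ∣ η := hp.prime.dvd_of_dvd_pow (n := 2) (hη2 ▸ hpg)
  have hηz : aeval z η = 0 := heval η hpη
  -- The three basic equations at `z`.
  have hE1c := heval _ hpg
  have hE2c := heval _ hph
  have hd := congrArg (fun q : Polynomial ℝ => aeval z (derivative q)) hη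
  simp only [derivative_mul, derivative_sub, derivative_add, derivative_pow, derivative_C,
    derivative_ofNat, Nat.cast_ofNat, map_ofNat, pow_one, zero_mul, mul_zero, zero_add,
    add_zero, sub_zero, one_mul, mul_one] at hd
  simp only [map_add, map_sub, map_mul, map_pow, map_ofNat, aeval_C] at hE1c hE2c hd
  set Tz := algebraMap ℝ ℂ t with hTz
  set W := aeval z ξ with hW
  set Wp := aeval z (derivative ξ) with hWp
  set Av := aeval z f₂ with hAv
  set Bv := aeval z f₃ with hBv
  set Cv := aeval z f₄ with hCv
  set Ap := aeval z (derivative f₂) with hAp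
  set Bp := aeval z (derivative f₃) with hBp
  set Cp := aeval z (derivative f₄) with hCp
  set Ep := aeval z (derivative η) with hEp
  have hT : Tz ≠ 0 := fun h => ht ((_root_.map_eq_zero (algebraMap ℝ ℂ)).mp h)
  -- Case `f₃(z) = 0` is impossible.
  by_cases hB0 : Bv = 0
  · exfalso
    have hpf₃ : p ∣ f₃ := hdvd f₃ hB0
    have hfact : (Tz * W - Av) * (W ^ 2 - 4 * Cv) = 0 := by
      linear_combination hE1c + Bv * hB0
    have hTWA : Tz * W - Av = 0 → False := by
      intro hTW
      have hW2 : W ^ 2 - 4 * Cv = 0 := by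
        have h4 : Tz * (W ^ 2 - 4 * Cv) = 0 := by linear_combination hE2c - 2 * W * hTW
        exact (mul_eq_zero.mp h4).resolve_left hT
      have hq : aeval z (f₂ ^ 2 - C (4 * t ^ 2) * f₄) = 0 := by
        simp only [map_add, map_sub, map_mul, map_pow, map_ofNat, aeval_C, ← hTz, ← hAv, ← hCv]
        linear_combination (- (Tz * W + Av)) * hTW + Tz ^ 2 * hW2
      have hpq : p ∣ f₂ ^ 2 - C (4 * t ^ 2) * f₄ := hdvd _ hq
      refine hΦ ⟨1, algebraMap ℝ ℂ (-(4 * t ^ 2)), fun h => one_ne_zero h.1,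
        p.map (algebraMap ℝ ℂ), ?_, Polynomial.map_dvd _ hpf₃, ?_⟩
      · rw [hdegmap, hpdeg]
      · have heq : C (1 : ℂ) * (f₂.map (algebraMap ℝ ℂ)) ^ 2
            + C (algebraMap ℝ ℂ (-(4 * t ^ 2))) * f₄.map (algebraMap ℝ ℂ)
            = (f₂ ^ 2 - C (4 * t ^ 2) * f₄).map (algebraMap ℝ ℂ) := by
          simp only [Polynomial.map_sub, Polynomial.map_pow, Polynomial.map_mul,
            Polynomial.map_C, map_neg, map_one, one_mul]
          ring
        rw [heq]
        exact Polynomial.map_dvd _ hpq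
    rcases mul_eq_zero.mp hfact with hTW | hW2
    · exact hTWA hTW
    · have h2W : (2 * W) * (Tz * W - Av) = 0 := by linear_combination hE2c - Tz * hW2
      rcases mul_eq_zero.mp h2W with hW0 | hTW
      · have hWz : W = 0 := by linear_combination hW0 / 2
        have hCv0 : Cv = 0 := by linear_combination (- hW2 + (W + 0) * hWz) / 4
        have hpf₄ : p ∣ f₄ := hdvd f₄ hCv0
        obtain ⟨uu, vv, huv⟩ := hc₁
        exact hp.not_isUnit (isUnit_of_dvd_one (by
          rw [← huv]; exact dvd_add (hpf₃.mul_left uu) (hpf₄.mul_left vv)))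
      · exact hTWA hTW
  -- Main case: `f₃(z) ≠ 0`. Use the Gröbner certificates.
  · have key1 : ((972 : ℂ) * Tz ^ 5 * Bv ^ 2) *
        ((2*Av*Cp - 4*Cv*Ap) ^ 2 - (2*Av*Bp - 3*Bv*Ap) * (3*Bv*Cp - 4*Cv*Bp)) = 0 := by
      linear_combination ((7776 : ℂ)*Tz^5*Cv^2*Ap^2 + (-8748 : ℂ)*Tz^5*Bv^2*Ap*Cp + (15552 : ℂ)*Tz^5*Av*Cv*Ap*Cp + (7776 : ℂ)*Tz^5*Av^2*Cp^2 + (-5832 : ℂ)*Tz^5*W^2*Cv*Ap^2 + (5832 : ℂ)*Tz^5*W^2*Av*Ap*Cp + (11664 : ℂ)*Tz^6*W*Cv*Ap*Cp + (-11664 : ℂ)*Tz^6*W*Av*Cp^2 + (-8748 : ℂ)*Tz^6*W^3*Ap*Cp) * hE1c + (((-7776 : ℂ)*Tz^5*W*Cv^2*Ap^2 + (11664 : ℂ)*Tz^5*W*Av*Cv*Ap*Cp + (-3888 : ℂ)*Tz^5*W*Av^2*Cp^2 + (1944 : ℂ)*Tz^5*W^3*Cv*Ap^2 + (-2916 : ℂ)*Tz^5*W^3*Av*Ap*Cp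 + (-11664 : ℂ)*Tz^6*W^2*Cv*Ap*Cp + (3888 : ℂ)*Tz^6*W^2*Av*Cp^2 + (2916 : ℂ)*Tz^6*W^4*Ap*Cp) - Wp * ((5832 : ℂ)*Tz^5*Bv^2*Cv*Ap + (-7776 : ℂ)*Tz^5*Av*Cv^2*Ap + (-3888 : ℂ)*Tz^5*Av*Bv*Cv*Bp + (2916 : ℂ)*Tz^5*Av*Bv^2*Cp + (-7776 : ℂ)*Tz^5*Av^2*Cv*Cp + (1944 : ℂ)*Tz^5*W^2*Av*Cv*Ap + (7776 : ℂ)*Tz^6*W*Av*Cv*Cp)) * hE2c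
        - ((5832 : ℂ)*Tz^5*Bv^2*Cv*Ap + (-7776 : ℂ)*Tz^5*Av*Cv^2*Ap + (-3888 : ℂ)*Tz^5*Av*Bv*Cv*Bp + (2916 : ℂ)*Tz^5*Av*Bv^2*Cp + (-7776 : ℂ)*Tz^5*Av^2*Cv*Cp + (1944 : ℂ)*Tz^5*W^2*Av*Cv*Ap + (7776 : ℂ)*Tz^6*W*Av*Cv*Cp) * hd + (2 * Ep * ((5832 : ℂ)*Tz^5*Bv^2*Cv*Ap + (-7776 : ℂ)*Tz^5*Av*Cv^2*Ap + (-3888 : ℂ)*Tz^5*Av*Bv*Cv*Bp + (2916 : ℂ)*Tz^5*Av*Bv^2*Cp + (-7776 : ℂ)*Tz^5*Av^2*Cv*Cp + (1944 : ℂ)*Tz^5*W^2*Av*Cv*Ap + (7776 : ℂ)*Tz^6*W*Av*Cv*Cp)) * hηz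
    have key2 : ((26244 : ℂ) * Tz ^ 8 * Bv ^ 3) *
        ((2*Av*Bp - 3*Bv*Ap) * ((2*Av*Bp - 3*Bv*Ap) * Bv - 2 * (2*Av*Cp - 4*Cv*Ap) * Av)
          - 4 * Tz ^ 2 * ((2*Av*Cp - 4*Cv*Ap) * (3*Bv*Cp - 4*Cv*Bp))) = 0 := by
      linear_combination ((-236196 : ℂ)*Tz^8*Bv^4*Ap^2 + (314928 : ℂ)*Tz^8*Av*Bv^2*Cv*Ap^2 + (314928 : ℂ)*Tz^8*Av^2*Bv^2*Ap*Cp + (78732 : ℂ)*Tz^8*W^2*Av*Bv^2*Ap^2 + (419904 : ℂ)*Tz^8*W^2*Av^2*Cv*Ap^2 + (-209952 : ℂ)*Tz^8*W^2*Av^3*Ap*Cp + (-104976 : ℂ)*Tz^8*W^4*Av^2*Ap^2 + (944784 : ℂ)*Tz^9*W*Bv^2*Cv*Ap^2 + (2519424 : ℂ)*Tz^9*W*Av*Cv^2*Ap^2 + (-629856 : ℂ)*Tz^9*W*Av*Bv^2*Ap*Cp + (-2099520 : ℂ)*Tz^9*W*Av^2*Cv*Ap*Cp + (419904 : ℂ)*Tz^9*W*Av^3*Cp^2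 + (-236196 : ℂ)*Tz^9*W^3*Bv^2*Ap^2 + (-1889568 : ℂ)*Tz^9*W^3*Av*Cv*Ap^2 + (734832 : ℂ)*Tz^9*W^3*Av^2*Ap*Cp + (314928 : ℂ)*Tz^9*W^5*Av*Ap^2 + (3359232 : ℂ)*Tz^10*Cv^3*Ap^2 + (-1259712 : ℂ)*Tz^10*Bv^2*Cv*Ap*Cp + (-3359232 : ℂ)*Tz^10*Av*Cv^2*Ap*Cp + (629856 : ℂ)*Tz^10*Av*Bv^2*Cp^2 + (839808 : ℂ)*Tz^10*Av^2*Cv*Cp^2 + (-4618944 : ℂ)*Tz^10*W^2*Cv^2*Ap^2 + (4199040 : ℂ)*Tz^10*W^2*Av*Cv*Ap*Cp + (-1049760 : ℂ)*Tz^10*W^2*Av^2*Cp^2 + (1889568 : ℂ)*Tz^10*W^4*Cv*Ap^2 + (-629856 : ℂ)*Tz^10*W^4*Av*Ap*Cp + (-236196 : ℂ)*Tz^10*W^6*Ap^2 + (1679616 : ℂ)*Tz^11*W*Cv^2*Ap*Cp + (-839808 : ℂ)*Tz^11*W*Av*Cv*Cp^2 + (-1259712 : ℂ)*Tz^11*W^3*Cv*Ap*Cp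 + (629856 : ℂ)*Tz^11*W^3*Av*Cp^2) * hE1c + (((839808 : ℂ)*Tz^8*W*Av^2*Cv^2*Ap^2 + (-419904 : ℂ)*Tz^8*W*Av^3*Cv*Ap*Cp + (-419904 : ℂ)*Tz^8*W^3*Av^2*Cv*Ap^2 + (104976 : ℂ)*Tz^8*W^3*Av^3*Ap*Cp + (52488 : ℂ)*Tz^8*W^5*Av^2*Ap^2 + (3359232 : ℂ)*Tz^9*Av*Cv^3*Ap^2 + (-3359232 : ℂ)*Tz^9*Av^2*Cv^2*Ap*Cp + (839808 : ℂ)*Tz^9*Av^3*Cv*Cp^2 + (-3779136 : ℂ)*Tz^9*W^2*Av*Cv^2*Ap^2 + (2099520 : ℂ)*Tz^9*W^2*Av^2*Cv*Ap*Cp + (-209952 : ℂ)*Tz^9*W^2*Av^3*Cp^2 + (1259712 : ℂ)*Tz^9*W^4*Av*Cv*Ap^2 + (-314928 : ℂ)*Tz^9*W^4*Av^2*Ap*Cp + (-131220 : ℂ)*Tz^9*W^6*Av*Ap^2 + (-3359232 : ℂ)*Tz^10*W*Cv^3*Ap^2 + (5038848 : ℂ)*Tz^10*W*Av*Cv^2*Ap*Cp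 + (-1679616 : ℂ)*Tz^10*W*Av^2*Cv*Cp^2 + (2939328 : ℂ)*Tz^10*W^3*Cv^2*Ap^2 + (-2099520 : ℂ)*Tz^10*W^3*Av*Cv*Ap*Cp + (419904 : ℂ)*Tz^10*W^3*Av^2*Cp^2 + (-839808 : ℂ)*Tz^10*W^5*Cv*Ap^2 + (209952 : ℂ)*Tz^10*W^5*Av*Ap*Cp + (78732 : ℂ)*Tz^10*W^7*Ap^2 + (-1679616 : ℂ)*Tz^11*W^2*Cv^2*Ap*Cp + (839808 : ℂ)*Tz^11*W^2*Av*Cv*Cp^2 + (419904 : ℂ)*Tz^11*W^4*Cv*Ap*Cp + (-209952 : ℂ)*Tz^11*W^4*Av*Cp^2) - Wp * ((157464 : ℂ)*Tz^8*Av*Bv^4*Ap + (-314928 : ℂ)*Tz^8*Av^2*Bv^2*Cv*Ap + (-52488 : ℂ)*Tz^8*Av^2*Bv^3*Bp + (26244 : ℂ)*Tz^8*W^2*Av^2*Bv^2*Ap + (104976 : ℂ)*Tz^9*W*Av^2*Bv^2*Cp + (839808 : ℂ)*Tz^10*Bv^2*Cv^2*Ap + (-419904 : ℂ)*Tz^10*Av*Bv^2*Cv*Cp))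 * hE2c
        - ((157464 : ℂ)*Tz^8*Av*Bv^4*Ap + (-314928 : ℂ)*Tz^8*Av^2*Bv^2*Cv*Ap + (-52488 : ℂ)*Tz^8*Av^2*Bv^3*Bp + (26244 : ℂ)*Tz^8*W^2*Av^2*Bv^2*Ap + (104976 : ℂ)*Tz^9*W*Av^2*Bv^2*Cp + (839808 : ℂ)*Tz^10*Bv^2*Cv^2*Ap + (-419904 : ℂ)*Tz^10*Av*Bv^2*Cv*Cp) * hd + (2 * Ep * ((157464 : ℂ)*Tz^8*Av*Bv^4*Ap + (-314928 : ℂ)*Tz^8*Av^2*Bv^2*Cv*Ap + (-52488 : ℂ)*Tz^8*Av^2*Bv^3*Bp + (26244 : ℂ)*Tz^8*W^2*Av^2*Bv^2*Ap + (104976 : ℂ)*Tz^9*W*Av^2*Bv^2*Cp + (839808 : ℂ)*Tz^10*Bv^2*Cv^2*Ap + (-419904 : ℂ)*Tz^10*Av*Bv^2*Cv*Cp)) * hηz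
    have hM1 : ((972 : ℂ) * Tz ^ 5 * Bv ^ 2) ≠ 0 :=
      mul_ne_zero (mul_ne_zero (by norm_num) (pow_ne_zero _ hT)) (pow_ne_zero _ hB0)
    have hM2 : ((26244 : ℂ) * Tz ^ 8 * Bv ^ 3) ≠ 0 :=
      mul_ne_zero (mul_ne_zero (by norm_num) (pow_ne_zero _ hT)) (pow_ne_zero _ hB0)
    have hV1 := (mul_eq_zero.mp key1).resolve_left hM1
    have hV2 := (mul_eq_zero.mp key2).resolve_left hM2
    constructor
    · refine hdvd _ ?_
      rw [hg₂₃, hg₂₄, hg₃₄]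
      simp only [map_add, map_sub, map_mul, map_pow, map_ofNat, aeval_C,
        ← hAv, ← hBv, ← hCv, ← hAp, ← hBp, ← hCp]
      linear_combination hV1
    · refine hdvd _ ?_
      rw [hg₂₃, hg₂₄, hg₃₄]
      simp only [map_add, map_sub, map_mul, map_pow, map_ofNat, aeval_C,
        ← hTz, ← hAv, ← hBv, ← hCv, ← hAp, ← hBp, ← hCp]
      linear_combination hV2
end

section
/- Let g = 7x³ − 3x² + 21x − 5 ∈ ℚ[x]. For any two distinct roots α ≠ β of g in ℂ, the intersection of the subfields ℚ(α) and ℚ(β) of ℂ equals ℚ. Equivalently, the splitting field of g over ℚ has degree 6, so any two different roots of g generate different cubic extensions of ℚ. -/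
/-!
`g` is irreducible over `ℚ` by the rational root test, and strictly increasing on `ℝ`, so exactly
two of its three complex roots are non-real. Complex conjugation therefore acts on the roots as a
transposition, and since the Galois group also contains a 3-cycle it is all of `S₃`, of order 6.
If two distinct roots `α`, `β` generated the same cubic field, that field would also contain the
third root `-b/a - α - β` and hence be the splitting field, of degree `6 ≠ 3`. So `ℚ(α) ≠ ℚ(β)`,
and two distinct fields of prime degree over `ℚ` meet in `ℚ`.
-/

open Polynomial IntermediateField

theorem Rat.den_dvd_and_num_dvd_of_cubic_eq_zero {a b c d : ℤ} {q : ℚ}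
    (h : a * q ^ 3 + b * q ^ 2 + c * q + d = 0) : (q.den : ℤ) ∣ a ∧ q.num ∣ d := by
  have hcop : IsCoprime q.num q.den := Int.isCoprime_iff_gcd_eq_one.mpr q.reduced
  have hcleared : a * q.num ^ 3 + b * q.num ^ 2 * q.den + c * q.num * q.den ^ 2
      + d * q.den ^ 3 = 0 := by
    have hden : (q.den : ℚ) ≠ 0 := by positivity
    have hq : q = q.num / q.den := (Rat.num_div_den q).symm
    rw [hq] at h
    field_simp at h
    have hℚ : (a * q.num ^ 3 + b * q.num ^ 2 * q.den + c * q.num * q.den ^ 2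
        + d * q.den ^ 3 : ℚ) = 0 := by linear_combination h
    exact_mod_cast hℚ
  constructor
  · refine (hcop.symm.pow_right (n := 3)).dvd_of_dvd_mul_right
      ⟨-(b * q.num ^ 2 + c * q.num * q.den + d * q.den ^ 2), ?_⟩
    linear_combination hcleared
  · refine (hcop.pow_right (n := 3)).dvd_of_dvd_mul_right
      ⟨-(a * q.num ^ 2 + b * q.num * q.den + c * q.den ^ 2), ?_⟩
    linear_combination hcleared

theorem eq_or_eq_or_eq_of_cubic_eq_zero {K : Type*} [Field K] {a b c d α β γ : K} (ha : a ≠ 0)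
    (hne : α ≠ β) (hα : a * α ^ 3 + b * α ^ 2 + c * α + d = 0)
    (hβ : a * β ^ 3 + b * β ^ 2 + c * β + d = 0) (hγ : a * γ ^ 3 + b * γ ^ 2 + c * γ + d = 0) :
    γ = α ∨ γ = β ∨ γ = -b / a - α - β := by
  have key : (α - β) * (γ - α) * (γ - β) * (a * (γ + α + β) + b) = 0 := by
    linear_combination (α - β) * hγ - (α - β) * hα + (γ - α) * hβ - (γ - α) * hα
  simp only [mul_eq_zero, sub_eq_zero] at key
  rcases key with ((h | h) | h) | h
  · exact absurd h hne
  · exact Or.inl h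
  · exact Or.inr (Or.inl h)
  · refine Or.inr (Or.inr ?_)
    field_simp
    linear_combination h

section IntermediateField

variable {F K : Type*} [Field F] [Field K] [Algebra F K]

theorem IntermediateField.inf_eq_bot_of_finrank_prime {E₁ E₂ : IntermediateField F K}
    (hp : (Module.finrank F E₁).Prime) (hrank : Module.finrank F E₂ = Module.finrank F E₁)
    (hne : E₁ ≠ E₂) : E₁ ⊓ E₂ = ⊥ := by
  have : FiniteDimensional F E₁ := Module.finite_of_finrank_pos hp.pos
  have : FiniteDimensional F E₂ := Module.finite_of_finrank_pos (hrank ▸ hp.pos)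
  rcases hp.eq_one_or_self_of_dvd _ (finrank_dvd_of_le_right inf_le_left) with h | h
  · exact finrank_eq_one_iff.mp h
  · refine absurd ?_ hne
    calc E₁ = E₁ ⊓ E₂ := (eq_of_le_of_finrank_eq inf_le_left h).symm
      _ = E₂ := eq_of_le_of_finrank_eq inf_le_right (h.trans hrank.symm)

theorem IntermediateField.finrank_adjoin_simple_of_irreducible {p : F[X]} (hp : Irreducible p)
    {α : K} (hα : aeval α p = 0) : Module.finrank F F⟮α⟯ = p.natDegree := by
  rw [adjoin.finrank (IsAlgebraic.isIntegral ⟨p, hp.ne_zero, hα⟩),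
    ← minpoly.eq_of_irreducible hp hα, natDegree_mul_leadingCoeff_inv _ hp.ne_zero]

theorem Polynomial.rootSet_subset_adjoin_of_natDegree_eq_three {p : F[X]} (hp : p.natDegree = 3)
    {α β : K} (hα : aeval α p = 0) (hβ : aeval β p = 0) (hne : α ≠ β) (hβα : β ∈ F⟮α⟯) :
    p.rootSet K ⊆ F⟮α⟯ := by
  have cubic : ∀ x : K, aeval x p = algebraMap F K (p.coeff 3) * x ^ 3
      + algebraMap F K (p.coeff 2) * x ^ 2 + algebraMap F K (p.coeff 1) * x
      + algebraMap F K (p.coeff 0) := by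
    intro x
    simp only [aeval_eq_sum_range, hp, Finset.sum_range_succ, Finset.sum_range_zero,
      Algebra.smul_def]
    ring
  have hlead : algebraMap F K (p.coeff 3) ≠ 0 := by
    rw [ne_eq, map_eq_zero, ← hp, ← leadingCoeff, leadingCoeff_eq_zero]
    rintro rfl
    simp at hp
  intro γ hγ
  have hγ : aeval γ p = 0 := (mem_rootSet.mp hγ).2
  rw [cubic] at hα hβ hγ
  rcases eq_or_eq_or_eq_of_cubic_eq_zero hlead hne hα hβ hγ with rfl | rfl | rfl
  · exact mem_adjoin_simple_self F γ
  · exact hβα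
  · have hcoeff : -algebraMap F K (p.coeff 2) / algebraMap F K (p.coeff 3) ∈ F⟮α⟯ := by
      rw [← map_neg, ← map_div₀]
      exact IntermediateField.algebraMap_mem _ _
    exact sub_mem (sub_mem hcoeff (mem_adjoin_simple_self F α)) hβα

theorem IntermediateField.adjoin_simple_ne_of_finrank_splittingField_ne {p : F[X]}
    (hirr : Irreducible p) (hp : p.natDegree = 3) (hsplit : (p.map (algebraMap F K)).Splits)
    (hrank : Module.finrank F p.SplittingField ≠ 3) {α β : K} (hα : aeval α p = 0)
    (hβ : aeval β p = 0) (hne : α ≠ β) : F⟮α⟯ ≠ F⟮β⟯ := by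
  intro h
  have hβα : β ∈ F⟮α⟯ := h ▸ mem_adjoin_simple_self F β
  have hle : adjoin F (p.rootSet K) ≤ F⟮α⟯ :=
    adjoin_le_iff.mpr (rootSet_subset_adjoin_of_natDegree_eq_three hp hα hβ hne hβα)
  have hge : F⟮α⟯ ≤ adjoin F (p.rootSet K) :=
    adjoin_simple_le_iff.mpr (subset_adjoin F _ (mem_rootSet.mpr ⟨hirr.ne_zero, hα⟩))
  have : IsSplittingField F (adjoin F (p.rootSet K)) p := adjoin_rootSet_isSplittingField hsplit
  apply hrank
  rw [← (IsSplittingField.algEquiv (adjoin F (p.rootSet K)) p).toLinearEquiv.finrank_eq,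
    le_antisymm hle hge, finrank_adjoin_simple_of_irreducible hirr hα, hp]

end IntermediateField

theorem Polynomial.strictMono_eval_of_derivative_pos {p : ℝ[X]}
    (h : ∀ x, 0 < p.derivative.eval x) : StrictMono p.eval :=
  strictMono_of_deriv_pos fun x ↦ by simpa only [Polynomial.deriv] using h x

theorem Polynomial.card_rootSet_real_le_one {p : ℚ[X]} (h : StrictMono fun x : ℝ ↦ aeval x p) :
    Fintype.card (p.rootSet ℝ) ≤ 1 :=
  Fintype.card_le_one_iff.mpr fun x y ↦ Subtype.ext <|
    h.injective <| (mem_rootSet.mp x.2).2.trans (mem_rootSet.mp y.2).2.symm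

theorem Polynomial.Gal.finrank_splittingField_eq_factorial {F E : Type*} [Field F] [Field E]
    [Algebra F E] {p : F[X]} [Fact (p.map (algebraMap F E)).Splits] (hsep : p.Separable)
    (hbij : Function.Bijective (galActionHom p E)) :
    Module.finrank F p.SplittingField = p.natDegree.factorial := by
  rw [← card_of_separable hsep, Nat.card_eq_of_bijective _ hbij, Nat.card_perm,
    Nat.card_eq_fintype_card, card_rootSet_eq_natDegree hsep Fact.out]

namespace ExampleCubic

noncomputable def g : ℚ[X] := 7 * X ^ 3 - 3 * X ^ 2 + 21 * X - 5

theorem natDegree_g : g.natDegree = 3 := by unfold g; compute_degree!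

theorem aeval_g {R : Type*} [CommRing R] [Algebra ℚ R] (x : R) :
    aeval x g = 7 * x ^ 3 - 3 * x ^ 2 + 21 * x - 5 := by
  simp [g, map_ofNat]

theorem cubic_ne_zero (q : ℚ) : 7 * q ^ 3 - 3 * q ^ 2 + 21 * q - 5 ≠ 0 := by
  intro h
  obtain ⟨hden, hnum⟩ := Rat.den_dvd_and_num_dvd_of_cubic_eq_zero (a := 7) (b := -3) (c := 21)
    (d := -5) (by push_cast; linear_combination h)
  have hden : q.den = 1 ∨ q.den = 7 := (Nat.dvd_prime Nat.prime_seven).mp (by exact_mod_cast hden)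
  have hnum : q.num.natAbs = 1 ∨ q.num.natAbs = 5 :=
    (Nat.dvd_prime Nat.prime_five).mp (Int.natAbs_dvd_natAbs.mpr hnum)
  rw [← Rat.num_div_den q] at h
  rcases hden with hd | hd <;> rcases hnum with hn | hn <;>
    rcases Int.natAbs_eq_iff.mp hn with hn | hn <;> rw [hd, hn] at h <;> norm_num at h

theorem irreducible_g : Irreducible g := by
  rw [irreducible_iff_roots_eq_zero_of_degree_le_three (by rw [natDegree_g]; norm_num)
    natDegree_g.le, Multiset.eq_zero_iff_forall_notMem]
  intro q hq
  have hq := (mem_roots'.mp hq).2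
  simp only [IsRoot.def, ← coe_aeval_eq_eval, aeval_g] at hq
  exact cubic_ne_zero q hq

theorem strictMono_aeval_g : StrictMono fun x : ℝ ↦ aeval x g := by
  simp_rw [← eval_map_algebraMap]
  refine strictMono_eval_of_derivative_pos fun x ↦ ?_
  have hderiv : (g.map (algebraMap ℚ ℝ)).derivative.eval x = 21 * x ^ 2 - 6 * x + 21 := by
    simp [g]
    ring
  rw [hderiv]
  nlinarith [sq_nonneg (7 * x - 1)]

theorem finrank_splittingField_g : Module.finrank ℚ g.SplittingField = 6 := by
  have : Fact (g.map (algebraMap ℚ ℂ)).Splits := Gal.splits_ℚ_ℂ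
  have hcardℂ : Fintype.card (g.rootSet ℂ) = 3 := by
    rw [card_rootSet_eq_natDegree irreducible_g.separable Fact.out, natDegree_g]
  have hcardℝ := card_rootSet_real_le_one strictMono_aeval_g
  have hbij := Gal.galActionHom_bijective_of_prime_degree' irreducible_g
    (natDegree_g ▸ Nat.prime_three) (by omega) (by omega)
  rw [Gal.finrank_splittingField_eq_factorial irreducible_g.separable hbij, natDegree_g]
  rfl

theorem inf_adjoin_eq_bot {α β : ℂ} (hne : α ≠ β) (hα : aeval α g = 0) (hβ : aeval β g = 0) :
    ℚ⟮α⟯ ⊓ ℚ⟮β⟯ = ⊥ := by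
  have hdegα := finrank_adjoin_simple_of_irreducible irreducible_g hα
  have hdegβ := finrank_adjoin_simple_of_irreducible irreducible_g hβ
  refine inf_eq_bot_of_finrank_prime (by rw [hdegα, natDegree_g]; exact Nat.prime_three)
    (hdegβ.trans hdegα.symm) ?_
  exact adjoin_simple_ne_of_finrank_splittingField_ne irreducible_g natDegree_g
    (IsAlgClosed.splits _) (by rw [finrank_splittingField_g]; norm_num) hα hβ hne

end ExampleCubic

/-- For `g = 7x³ − 3x² + 21x − 5`, any two distinct complex roots `α ≠ β`
generate subfields of `ℂ` intersecting in `ℚ`; equivalently the splitting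
field of `g` over `ℚ` has degree 6. -/
theorem cubic_roots_generate_distinct_cubic_fields :
    (∀ α β : ℂ, α ≠ β →
      aeval α (7 * X ^ 3 - 3 * X ^ 2 + 21 * X - 5 : Polynomial ℚ) = 0 →
      aeval β (7 * X ^ 3 - 3 * X ^ 2 + 21 * X - 5 : Polynomial ℚ) = 0 →
      (ℚ⟮α⟯ ⊓ ℚ⟮β⟯ : IntermediateField ℚ ℂ) = ⊥) ∧
    Module.finrank ℚ
      (7 * X ^ 3 - 3 * X ^ 2 + 21 * X - 5 : Polynomial ℚ).SplittingField = 6 :=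
  ⟨fun _ _ hne hα hβ ↦ ExampleCubic.inf_adjoin_eq_bot hne hα hβ,
    ExampleCubic.finrank_splittingField_g⟩
end

section
/- Let P = 56x⁸ − 52x⁷ + 180x⁶ − 40x⁵ + 40x⁴ + 284x³ + 84x² + 128x − 40, A = 96x⁹ − 16x⁸ − 160x⁷ + 704x⁶ − 208x⁵ − 512x⁴ + 208x³ + 208x² − 128x, and B = 40x⁹ − 108x⁸ + 316x⁷ − 198x⁶ + 316x⁵ + 122x⁴ + 180x³ − 178x² − 84x − 22, regarded as polynomials in ℂ[x]. Then for every pair (a,b) ∈ ℂ² with (a,b) ≠ (0,0), the polynomials P and a·A + b·B have at most one common root in ℂ; equivalently, P and a·A + b·B have no common factor of degree ≥ 2 in ℂ[x]. -/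
/-!
The key fact is that `α ↦ [A(α) : B(α)]` is injective on the roots of `P`: two distinct common
roots `α ≠ β` of `P` and `a A + b B` would make `(a, b) ≠ 0` a kernel vector of the matrix
`((A α, B α), (A β, B β))`, so its determinant `A(α) B(β) - A(β) B(α)` would vanish. Injectivity
is checked factor by factor in `P = 4 (x + 1)(2x² + x + 1)(x² - 2x + 2)(7x³ - 3x² + 21x - 5)`.
A common factor of degree `≥ 2` has two roots (counted with multiplicity) that are common roots,
and a double one is excluded since `P` is separable.
-/

open Polynomial

section Pencil

variable {K : Type*} [Field K]

theorem det_eq_zero_of_eval_pencil_eq_zero {A B : K[X]} {a b α β : K} (hab : ¬(a = 0 ∧ b = 0))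
    (hα : (C a * A + C b * B).eval α = 0) (hβ : (C a * A + C b * B).eval β = 0) :
    A.eval α * B.eval β - A.eval β * B.eval α = 0 := by
  simp only [eval_add, eval_mul, eval_C] at hα hβ
  by_cases ha : a = 0
  · refine (mul_eq_zero.mp ?_).resolve_left fun hb => hab ⟨ha, hb⟩
    linear_combination A.eval α * hβ - A.eval β * hα
  · refine (mul_eq_zero.mp ?_).resolve_left ha
    linear_combination B.eval β * hα - B.eval α * hβ

theorem eq_of_eval_pencil_eq_zero {P A B : K[X]}
    (hdet : ∀ α β : K, P.eval α = 0 → P.eval β = 0 → α ≠ β →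
      A.eval α * B.eval β - A.eval β * B.eval α ≠ 0)
    {a b : K} (hab : ¬(a = 0 ∧ b = 0)) (α β : K) (hPα : P.eval α = 0)
    (hα : (C a * A + C b * B).eval α = 0) (hPβ : P.eval β = 0)
    (hβ : (C a * A + C b * B).eval β = 0) : α = β :=
  by_contra fun hne => hdet α β hPα hPβ hne (det_eq_zero_of_eval_pencil_eq_zero hab hα hβ)

theorem exists_mul_X_sub_C_dvd_of_two_le_degree [IsAlgClosed K] {d : K[X]} (hd : 2 ≤ d.degree) :
    ∃ α β : K, (X - C α) * (X - C β) ∣ d := by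
  obtain ⟨α, hα⟩ := IsAlgClosed.exists_root d fun h => absurd (h ▸ hd) (by decide)
  obtain ⟨e, rfl⟩ := dvd_iff_isRoot.mpr hα
  have he : e.degree ≠ 0 := by
    intro h
    rw [degree_mul, degree_X_sub_C, h] at hd
    exact absurd hd (by decide)
  obtain ⟨β, hβ⟩ := IsAlgClosed.exists_root e he
  exact ⟨α, β, mul_dvd_mul_left _ (dvd_iff_isRoot.mpr hβ)⟩

theorem not_exists_common_dvd_of_squarefree [IsAlgClosed K] {P Q : K[X]} (hP : Squarefree P)
    (hroots : ∀ α β : K, P.eval α = 0 → Q.eval α = 0 → P.eval β = 0 → Q.eval β = 0 → α = β) :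
    ¬ ∃ d : K[X], 2 ≤ d.degree ∧ d ∣ P ∧ d ∣ Q := by
  rintro ⟨d, hdeg, hdP, hdQ⟩
  obtain ⟨α, β, hαβ⟩ := exists_mul_X_sub_C_dvd_of_two_le_degree hdeg
  obtain rfl | hne := eq_or_ne α β
  · exact not_isUnit_X_sub_C α (hP _ (hαβ.trans hdP))
  · have hroot : ∀ {R : K[X]}, d ∣ R → R.eval α = 0 ∧ R.eval β = 0 := fun hR =>
      have h := hαβ.trans hR
      ⟨dvd_iff_isRoot.mp ((dvd_mul_right _ _).trans h),
        dvd_iff_isRoot.mp ((dvd_mul_left _ _).trans h)⟩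
    exact hne (hroots α β (hroot hdP).1 (hroot hdQ).1 (hroot hdP).2 (hroot hdQ).2)

end Pencil

namespace PencilExample

noncomputable def P : ℂ[X] :=
  56 * X ^ 8 - 52 * X ^ 7 + 180 * X ^ 6 - 40 * X ^ 5 + 40 * X ^ 4
    + 284 * X ^ 3 + 84 * X ^ 2 + 128 * X - 40

noncomputable def A : ℂ[X] :=
  96 * X ^ 9 - 16 * X ^ 8 - 160 * X ^ 7 + 704 * X ^ 6
    - 208 * X ^ 5 - 512 * X ^ 4 + 208 * X ^ 3 + 208 * X ^ 2 - 128 * X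

noncomputable def B : ℂ[X] :=
  40 * X ^ 9 - 108 * X ^ 8 + 316 * X ^ 7 - 198 * X ^ 6
    + 316 * X ^ 5 + 122 * X ^ 4 + 180 * X ^ 3 - 178 * X ^ 2 - 84 * X - 22

theorem eval_P_eq_zero_iff (x : ℂ) :
    P.eval x = 0 ↔ x + 1 = 0 ∨ 2 * x ^ 2 + x + 1 = 0 ∨ x ^ 2 - 2 * x + 2 = 0 ∨
      7 * x ^ 3 - 3 * x ^ 2 + 21 * x - 5 = 0 := by
  have h : P.eval x = 4 * ((x + 1) * ((2 * x ^ 2 + x + 1) *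
      ((x ^ 2 - 2 * x + 2) * (7 * x ^ 3 - 3 * x ^ 2 + 21 * x - 5)))) := by
    simp only [P, eval_add, eval_sub, eval_mul, eval_pow, eval_ofNat, eval_X]
    ring
  simp [h]

theorem derivative_P : derivative P = 448 * X ^ 7 - 364 * X ^ 6 + 1080 * X ^ 5 - 200 * X ^ 4
    + 160 * X ^ 3 + 852 * X ^ 2 + 168 * X + 128 := by
  simp only [P, derivative_sub, derivative_add, derivative_mul, derivative_X_pow,
    derivative_ofNat, derivative_X, map_ofNat, Nat.cast_ofNat]
  ring

theorem separable_P : P.Separable := by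
  rw [separable_def, isCoprime_iff_aeval_ne_zero_of_isAlgClosed ℂ ℂ, derivative_P]
  intro x
  rw [← not_and_or]
  rintro ⟨hP, hP'⟩
  simp only [coe_aeval_eq_eval] at hP hP'
  simp only [eval_add, eval_sub, eval_mul, eval_pow, eval_ofNat, eval_X] at hP'
  rcases (eval_P_eq_zero_iff x).mp hP with h | h | h | h <;> grind

theorem det_ne_zero {α β : ℂ} (hα : P.eval α = 0) (hβ : P.eval β = 0) (hne : α ≠ β) :
    A.eval α * B.eval β - A.eval β * B.eval α ≠ 0 := by
  -- Once the factors of `P` vanishing at `α` and `β` are fixed, each case is an ideal membership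
  -- problem in a quotient `ℚ[α, β] / (p(α), q(β))` of dimension at most 9, which the Gröbner
  -- basis engine of `grind` settles.
  simp only [A, B, eval_add, eval_sub, eval_mul, eval_pow, eval_ofNat, eval_X]
  rcases (eval_P_eq_zero_iff α).mp hα with h | h | h | h <;>
    rcases (eval_P_eq_zero_iff β).mp hβ with h' | h' | h' | h' <;> grind

end PencilExample

/-- Non-vanishing of the invariant `Φ₈,₉(P,A,B)`: for every nontrivial complex
pair `(a,b)`, the polynomials `P` and `a·A + b·B` have at most one common root
in `ℂ`; equivalently, they have no common factor of degree `≥ 2` in `ℂ[x]`. -/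
theorem P_and_pencil_no_two_common_roots
    (P A B : Polynomial ℂ)
    (hP : P = 56 * X ^ 8 - 52 * X ^ 7 + 180 * X ^ 6 - 40 * X ^ 5 + 40 * X ^ 4
        + 284 * X ^ 3 + 84 * X ^ 2 + 128 * X - 40)
    (hA : A = 96 * X ^ 9 - 16 * X ^ 8 - 160 * X ^ 7 + 704 * X ^ 6
        - 208 * X ^ 5 - 512 * X ^ 4 + 208 * X ^ 3 + 208 * X ^ 2 - 128 * X)
    (hB : B = 40 * X ^ 9 - 108 * X ^ 8 + 316 * X ^ 7 - 198 * X ^ 6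
        + 316 * X ^ 5 + 122 * X ^ 4 + 180 * X ^ 3 - 178 * X ^ 2 - 84 * X - 22) :
    ∀ a b : ℂ, ¬(a = 0 ∧ b = 0) →
      (∀ α β : ℂ,
        P.eval α = 0 → (C a * A + C b * B).eval α = 0 →
        P.eval β = 0 → (C a * A + C b * B).eval β = 0 → α = β) ∧
      ¬ ∃ d : Polynomial ℂ, 2 ≤ d.degree ∧ d ∣ P ∧ d ∣ (C a * A + C b * B) := by
  obtain rfl : P = PencilExample.P := hP
  obtain rfl : A = PencilExample.A := hA
  obtain rfl : B = PencilExample.B := hB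
  intro a b hab
  have hroots := eq_of_eval_pencil_eq_zero (fun _ _ => PencilExample.det_ne_zero) hab
  exact ⟨hroots, not_exists_common_dvd_of_squarefree PencilExample.separable_P.squarefree hroots⟩
end

section
/- Let f₂, f₃, f₄ ∈ ℝ[x], set g_{ij} = i f_i f_j' − j f_j f_i' for i,j ∈ {2,3,4}, and let p ∈ ℝ[x] be an irreducible quadratic polynomial with p dividing g_{24}² − g_{23}g_{34} and p not dividing g_{23}. Let h ∈ ℝ[x] satisfy g_{23}·h ≡ g_{24} (mod p). Then g_{24}·h ≡ g_{34} (mod p) and g_{23}·h² ≡ g_{34} (mod p), and moreover 2h²f₂ − 3hf₃ + 4f₄ ≡ 0 (mod p). -/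
open Polynomial

/-- Modulo the irreducible quadratic `p` dividing `g₂₄² − g₂₃g₃₄` (with
`g₂₃ ≢ 0`), if `g₂₃·h ≡ g₂₄` then `g₂₄·h ≡ g₃₄`, `g₂₃·h² ≡ g₃₄`, and
`2h²f₂ − 3hf₃ + 4f₄ ≡ 0`. -/
theorem congruences_mod_p
    (f₂ f₃ f₄ : Polynomial ℝ)
    (g₂₃ g₂₄ g₃₄ : Polynomial ℝ)
    (hg₂₃ : g₂₃ = 2 * f₂ * derivative f₃ - 3 * f₃ * derivative f₂)
    (hg₂₄ : g₂₄ = 2 * f₂ * derivative f₄ - 4 * f₄ * derivative f₂)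
    (hg₃₄ : g₃₄ = 3 * f₃ * derivative f₄ - 4 * f₄ * derivative f₃)
    (p : Polynomial ℝ) (hp : Irreducible p) (hpdeg : p.degree = 2)
    (hP : p ∣ g₂₄ ^ 2 - g₂₃ * g₃₄)
    (hg : ¬ p ∣ g₂₃)
    (h : Polynomial ℝ) (hh : p ∣ g₂₃ * h - g₂₄) :
    p ∣ g₂₄ * h - g₃₄ ∧
    p ∣ g₂₃ * h ^ 2 - g₃₄ ∧
    p ∣ 2 * h ^ 2 * f₂ - 3 * h * f₃ + 4 * f₄ := by
  have hprime : Prime p := hp.prime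
  have key : 2 * f₂ * g₃₄ - 3 * f₃ * g₂₄ + 4 * f₄ * g₂₃ = 0 := by
    subst hg₂₃ hg₂₄ hg₃₄; ring
  have h1 : p ∣ g₂₄ * h - g₃₄ := by
    have : p ∣ g₂₃ * (g₂₄ * h - g₃₄) := by
      have : g₂₃ * (g₂₄ * h - g₃₄) =
          g₂₄ * (g₂₃ * h - g₂₄) + (g₂₄ ^ 2 - g₂₃ * g₃₄) := by ring
      rw [this]; exact dvd_add (Dvd.dvd.mul_left hh _) hP
    exact (hprime.dvd_mul.mp this).resolve_left hg
  have h2 : p ∣ g₂₃ * h ^ 2 - g₃₄ := by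
    have : p ∣ g₂₃ * (g₂₃ * h ^ 2 - g₃₄) := by
      have : g₂₃ * (g₂₃ * h ^ 2 - g₃₄) =
          (g₂₃ * h - g₂₄) * (g₂₃ * h + g₂₄) + (g₂₄ ^ 2 - g₂₃ * g₃₄) := by ring
      rw [this]; exact dvd_add (Dvd.dvd.mul_right hh _) hP
    exact (hprime.dvd_mul.mp this).resolve_left hg
  refine ⟨h1, h2, ?_⟩
  have : p ∣ g₂₃ * (2 * h ^ 2 * f₂ - 3 * h * f₃ + 4 * f₄) := by
    have e : g₂₃ * (2 * h ^ 2 * f₂ - 3 * h * f₃ + 4 * f₄) =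
        2 * f₂ * (g₂₃ * h ^ 2 - g₃₄) - 3 * f₃ * (g₂₃ * h - g₂₄) +
          (2 * f₂ * g₃₄ - 3 * f₃ * g₂₄ + 4 * f₄ * g₂₃) := by ring
    rw [e, key, add_zero]
    exact dvd_sub (Dvd.dvd.mul_left h2 _) (Dvd.dvd.mul_left hh _)
  exact (hprime.dvd_mul.mp this).resolve_left hg
end
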